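/- Let {M, I − M} be a dichotomic POVM on ℂ² (M positive semidefinite with I − M positive semidefinite). Then the noises with respect to the Pauli observables σ_z and σ_x satisfy g(N({M, I−M}, σ_z))² + g(N({M, I−M}, σ_x))² ≤ 1. -/

import Mathlib

open Matrix
open scoped ComplexOrder

noncomputable section

/-- The binary-entropy-type function `h(x) = -((1+x)/2)·log₂((1+x)/2) - ((1-x)/2)·log₂((1-x)/2)`
(with the convention `0·log₂ 0 = 0`, automatic since `Real.logb 2 0 = 0`). -/
def hFun (x : ℝ) : ℝ :=
  -(((1 + x) / 2) * Real.logb 2 ((1 + x) / 2)) - ((1 - x) / 2) * Real.logb 2 ((1 - x) / 2)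

/-- `g : [0,1] → [0,1]` is the inverse of `h` on `[0,1]`. -/
def gFun : ℝ → ℝ := Function.invFunOn hFun (Set.Icc 0 1)

/-- The (real) quadratic form `⟨v|M|v⟩`. -/
def qform {d : ℕ} (M : Matrix (Fin d) (Fin d) ℂ) (v : Fin d → ℂ) : ℝ :=
  (star v ⬝ᵥ M.mulVec v).re

/-- `v` is an orthonormal basis (family) of `ℂ^d`. -/
def IsONB {d : ℕ} (v : Fin d → Fin d → ℂ) : Prop :=
  ∀ i j, star (v i) ⬝ᵥ v j = if i = j then 1 else 0

/-- A POVM: a finite family of positive semidefinite matrices summing to the identity. -/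
def IsPOVM {d : ℕ} {ι : Type*} [Fintype ι] (M : ι → Matrix (Fin d) (Fin d) ℂ) : Prop :=
  (∀ m, (M m).PosSemidef) ∧ ∑ m, M m = 1

/-- A density matrix: positive semidefinite with trace 1. -/
def IsDensity {d : ℕ} (ρ : Matrix (Fin d) (Fin d) ℂ) : Prop :=
  ρ.PosSemidef ∧ ρ.trace = 1

/-- The noise `N(M,A) = -Σ_{m,a} p(m,a)·log₂(p(m,a)/p(m))` with `p(m,a) = (1/d)·⟨a|M_m|a⟩`
and `p(m) = (1/d)·Tr[M_m]`, for an observable `A` with orthonormal eigenbasis `v`. -/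
def noise {d : ℕ} {ι : Type*} [Fintype ι] (M : ι → Matrix (Fin d) (Fin d) ℂ)
    (v : Fin d → Fin d → ℂ) : ℝ :=
  -∑ m, ∑ a, ((1 / (d : ℝ)) * qform (M m) (v a)) *
      Real.logb 2 (((1 / (d : ℝ)) * qform (M m) (v a)) / ((1 / (d : ℝ)) * (M m).trace.re))

/-- `H(A|ρ) = -Σ_a ⟨a|ρ|a⟩·log₂⟨a|ρ|a⟩` for an observable with orthonormal eigenbasis `v`. -/
def Hobs {d : ℕ} (v : Fin d → Fin d → ℂ) (ρ : Matrix (Fin d) (Fin d) ℂ) : ℝ :=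
  -∑ a, qform ρ (v a) * Real.logb 2 (qform ρ (v a))

/-- Conditional Shannon entropy `H(X|Y) = -Σ_{x,y} p(x,y)·log₂(p(x,y)/p(y))` of a finite joint
distribution, conditioning on the second variable. -/
def condEnt {X Y : Type*} [Fintype X] [Fintype Y] (p : X → Y → ℝ) : ℝ :=
  -∑ x, ∑ y, p x y * Real.logb 2 (p x y / ∑ x', p x' y)

/-- Pauli matrix σ_x. -/
def σx : Matrix (Fin 2) (Fin 2) ℂ := !![0, 1; 1, 0]
/-- Pauli matrix σ_y. -/
def σy : Matrix (Fin 2) (Fin 2) ℂ := !![0, -Complex.I; Complex.I, 0]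
/-- Pauli matrix σ_z. -/
def σz : Matrix (Fin 2) (Fin 2) ℂ := !![1, 0; 0, -1]

/-- `v·σ = v₁σ_x + v₂σ_y + v₃σ_z` for `v ∈ ℝ³`. -/
def vecσ (v : Fin 3 → ℝ) : Matrix (Fin 2) (Fin 2) ℂ :=
  (v 0 : ℂ) • σx + (v 1 : ℂ) • σy + (v 2 : ℂ) • σz

/-- The canonical orthonormal eigenbasis of σ_z. -/
def basisZ : Fin 2 → Fin 2 → ℂ := fun i j => if i = j then 1 else 0

/-- The canonical orthonormal eigenbasis `|±x⟩` of σ_x. -/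
def basisX : Fin 2 → Fin 2 → ℂ := fun i =>
  ![((1 / Real.sqrt 2 : ℝ) : ℂ),
    if i = 0 then ((1 / Real.sqrt 2 : ℝ) : ℂ) else (-(1 / Real.sqrt 2 : ℝ) : ℂ)]

/-- Eigenvalues `+1, -1` of a (nondegenerate) Pauli observable. -/
def pmEig : Fin 2 → ℂ := fun i => if i = 0 then 1 else -1

end

/-!
Write `M = ½(t·I + x σ_x + y σ_y + z σ_z)`. For a Pauli observable with contrast `c` (`c = z` for
`σ_z`, `c = x` for `σ_x`), the noise of `{M, I − M}` is the average of `h(|c|/t)` and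
`h(|c|/(2 − t))` with weights `t/2` and `1 − t/2`. As `h` decreases on `[0,1]`, the noise is at
least `h(|c|/m)` with `m = min(t, 2 − t)`, hence `g(N) ≤ |c|/m`. Positivity of `M` and `I − M`
(nonnegative determinants) gives `x² + z² ≤ m²`.
-/

open Real

lemma hFun_eq_binEntropy (x : ℝ) : hFun x = binEntropy ((1 + x) / 2) / log 2 := by
  rw [hFun, binEntropy, logb, logb, log_inv, log_inv, show 1 - (1 + x) / 2 = (1 - x) / 2 by ring]
  ring

lemma hFun_neg (x : ℝ) : hFun (-x) = hFun x := by
  rw [hFun, hFun, show 1 + -x = 1 - x by ring, show 1 - -x = 1 + x by ring]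
  ring

lemma hFun_abs (x : ℝ) : hFun |x| = hFun x := by
  rcases abs_choice x with h | h <;> rw [h]
  exact hFun_neg x

lemma hFun_zero : hFun 0 = 1 := by
  rw [hFun_eq_binEntropy, add_zero, one_div, binEntropy_two_inv, div_self (log_pos one_lt_two).ne']

lemma hFun_one : hFun 1 = 0 := by
  rw [hFun_eq_binEntropy, one_add_one_eq_two, div_self two_ne_zero, binEntropy_one, zero_div]

lemma hFun_nonneg {x : ℝ} (h₀ : -1 ≤ x) (h₁ : x ≤ 1) : 0 ≤ hFun x := by
  rw [hFun_eq_binEntropy]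
  exact div_nonneg (binEntropy_nonneg (by linarith) (by linarith)) (log_nonneg one_le_two)

lemma hFun_le_one (x : ℝ) : hFun x ≤ 1 := by
  rw [hFun_eq_binEntropy, div_le_one (log_pos one_lt_two)]
  exact binEntropy_le_log_two

lemma hFun_strictAntiOn : StrictAntiOn hFun (Set.Icc 0 1) := by
  intro a ha b hb hab
  rw [hFun_eq_binEntropy, hFun_eq_binEntropy, div_lt_div_iff_of_pos_right (log_pos one_lt_two)]
  exact binEntropy_strictAntiOn ⟨by linarith [ha.1], by linarith [ha.2]⟩
    ⟨by linarith [hb.1], by linarith [hb.2]⟩ (by linarith)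

lemma continuous_hFun : Continuous hFun := by
  simp_rw [funext hFun_eq_binEntropy]
  fun_prop

lemma gFun_mem_Icc_of_hFun_le {N s : ℝ} (hN : N ≤ 1) (hs : s ∈ Set.Icc 0 1) (hsN : hFun s ≤ N) :
    gFun N ∈ Set.Icc 0 s := by
  have hex : ∃ y ∈ Set.Icc (0 : ℝ) 1, hFun y = N := by
    refine intermediate_value_Icc' zero_le_one continuous_hFun.continuousOn ?_
    rw [hFun_one, hFun_zero]
    exact ⟨(hFun_nonneg (by linarith [hs.1]) hs.2).trans hsN, hN⟩
  have hg : gFun N ∈ Set.Icc (0 : ℝ) 1 := Function.invFunOn_mem hex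
  refine ⟨hg.1, not_lt.1 fun hlt => ?_⟩
  have := hFun_strictAntiOn hs hg hlt
  rw [gFun, Function.invFunOn_eq hex] at this
  linarith

/-- The term `p(m)·H(A | m)` of the noise on `ℂ²`, where `p = ⟨a₀|M_m|a₀⟩` and `q = ⟨a₁|M_m|a₁⟩`. -/
noncomputable def outcomeEntropy (p q : ℝ) : ℝ := (p + q) / 2 * hFun ((p - q) / (p + q))

lemma outcomeEntropy_eq (p q : ℝ) :
    1 / 2 * p * logb 2 (1 / 2 * p / (1 / 2 * (p + q))) +
      1 / 2 * q * logb 2 (1 / 2 * q / (1 / 2 * (p + q))) = -outcomeEntropy p q := by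
  rcases eq_or_ne (p + q) 0 with h | h
  · simp [outcomeEntropy, h]
  have hp : 1 / 2 * p / (1 / 2 * (p + q)) = (1 + (p - q) / (p + q)) / 2 := by field_simp; ring
  have hq : 1 / 2 * q / (1 / 2 * (p + q)) = (1 - (p - q) / (p + q)) / 2 := by field_simp; ring
  rw [outcomeEntropy, hFun, hp, hq]
  field_simp
  ring

lemma outcomeEntropy_le {p q : ℝ} (hp : 0 ≤ p) (hq : 0 ≤ q) : outcomeEntropy p q ≤ (p + q) / 2 :=
  mul_le_of_le_one_right (by positivity) (hFun_le_one _)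

lemma mul_hFun_le_outcomeEntropy {p q s : ℝ} (hp : 0 ≤ p) (hq : 0 ≤ q) (hs : s ∈ Set.Icc 0 1)
    (hpq : |p - q| ≤ s * (p + q)) : (p + q) / 2 * hFun s ≤ outcomeEntropy p q := by
  rcases (add_nonneg hp hq).eq_or_lt with h | h
  · simp [outcomeEntropy, ← h]
  refine mul_le_mul_of_nonneg_left ?_ (by positivity)
  have hle : |(p - q) / (p + q)| ≤ s := by
    rwa [abs_div, abs_of_pos h, div_le_iff₀ h]
  rw [← hFun_abs ((p - q) / (p + q))]
  exact hFun_strictAntiOn.antitoneOn ⟨abs_nonneg _, hle.trans hs.2⟩ hs hle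

lemma noise_eq_sum_outcomeEntropy {ι : Type*} [Fintype ι] (M : ι → Matrix (Fin 2) (Fin 2) ℂ)
    (v : Fin 2 → Fin 2 → ℂ)
    (hv : ∀ m, qform (M m) (v 0) + qform (M m) (v 1) = (M m).trace.re) :
    noise M v = ∑ m, outcomeEntropy (qform (M m) (v 0)) (qform (M m) (v 1)) := by
  simp only [noise, Fin.sum_univ_two, Nat.cast_ofNat, ← hv, outcomeEntropy_eq,
    Finset.sum_neg_distrib, neg_neg]

/-- `Tr[N A]` for the observable `A` with eigenvalues `±1` and eigenbasis `v`. -/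
noncomputable def contrast (N : Matrix (Fin 2) (Fin 2) ℂ) (v : Fin 2 → Fin 2 → ℂ) : ℝ :=
  qform N (v 0) - qform N (v 1)

lemma qform_sub {d : ℕ} (N N' : Matrix (Fin d) (Fin d) ℂ) (v : Fin d → ℂ) :
    qform (N - N') v = qform N v - qform N' v := by
  simp [qform, Matrix.sub_mulVec, dotProduct_sub]

lemma contrast_sub (N N' : Matrix (Fin 2) (Fin 2) ℂ) (v : Fin 2 → Fin 2 → ℂ) :
    contrast (N - N') v = contrast N v - contrast N' v := by
  simp only [contrast, qform_sub]
  ring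

lemma IsPOVM.sum_trace_re {d : ℕ} {ι : Type*} [Fintype ι] {M : ι → Matrix (Fin d) (Fin d) ℂ}
    (hM : IsPOVM M) : ∑ m, (M m).trace.re = d := by
  rw [← Complex.re_sum, ← Matrix.trace_sum, hM.2, Matrix.trace_one, Fintype.card_fin,
    Complex.natCast_re]

lemma IsPOVM.gFun_noise_mem_Icc {ι : Type*} [Fintype ι] {M : ι → Matrix (Fin 2) (Fin 2) ℂ}
    (hM : IsPOVM M) {v : Fin 2 → Fin 2 → ℂ}
    (hv : ∀ m, qform (M m) (v 0) + qform (M m) (v 1) = (M m).trace.re) {s : ℝ}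
    (hs : s ∈ Set.Icc 0 1)
    (hdiff : ∀ m, |contrast (M m) v| ≤ s * (M m).trace.re) :
    gFun (noise M v) ∈ Set.Icc 0 s := by
  have hq : ∀ m a, 0 ≤ qform (M m) (v a) := fun m a => (hM.1 m).re_dotProduct_nonneg (v a)
  have htr : ∑ m, (M m).trace.re / 2 = 1 := by
    rw [← Finset.sum_div, hM.sum_trace_re]; norm_num
  rw [noise_eq_sum_outcomeEntropy M v hv]
  refine gFun_mem_Icc_of_hFun_le ?_ hs ?_
  · calc _ ≤ ∑ m, (M m).trace.re / 2 :=
          Finset.sum_le_sum fun m _ => hv m ▸ outcomeEntropy_le (hq m 0) (hq m 1)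
      _ = 1 := htr
  · calc hFun s = ∑ m, (M m).trace.re / 2 * hFun s := by rw [← Finset.sum_mul, htr, one_mul]
      _ ≤ _ := Finset.sum_le_sum fun m _ =>
          hv m ▸ mul_hFun_le_outcomeEntropy (hq m 0) (hq m 1) hs (hv m ▸ hdiff m)

lemma qform_basisZ (N : Matrix (Fin 2) (Fin 2) ℂ) (i : Fin 2) :
    qform N (basisZ i) = (N i i).re := by
  fin_cases i <;> simp [qform, basisZ, dotProduct, mulVec]

lemma one_div_sqrt_two_mul_self : 1 / √2 * (1 / √2) = 1 / 2 := by
  rw [one_div_mul_one_div, mul_self_sqrt zero_le_two]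

lemma qform_basisX_zero (N : Matrix (Fin 2) (Fin 2) ℂ) :
    qform N (basisX 0) = (N 0 0 + N 0 1 + N 1 0 + N 1 1).re / 2 := by
  simp only [qform, basisX, dotProduct, mulVec, Fin.sum_univ_two, Pi.star_apply, cons_val_zero,
    cons_val_one, cons_val_fin_one, if_pos, Complex.star_def, Complex.conj_ofReal, Complex.add_re,
    Complex.mul_re, Complex.ofReal_re, Complex.ofReal_im]
  linear_combination ((N 0 0).re + (N 0 1).re + (N 1 0).re + (N 1 1).re) * one_div_sqrt_two_mul_self

lemma qform_basisX_one (N : Matrix (Fin 2) (Fin 2) ℂ) :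
    qform N (basisX 1) = (N 0 0 - N 0 1 - N 1 0 + N 1 1).re / 2 := by
  simp only [qform, basisX, dotProduct, mulVec, Fin.sum_univ_two, Pi.star_apply, cons_val_zero,
    cons_val_one, cons_val_fin_one, one_ne_zero, if_false, Complex.star_def, map_neg,
    Complex.conj_ofReal, Complex.add_re, Complex.sub_re, Complex.neg_re, Complex.neg_im,
    Complex.mul_re, Complex.ofReal_re, Complex.ofReal_im]
  linear_combination ((N 0 0).re - (N 0 1).re - (N 1 0).re + (N 1 1).re) * one_div_sqrt_two_mul_self

lemma qform_basisZ_add (N : Matrix (Fin 2) (Fin 2) ℂ) :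
    qform N (basisZ 0) + qform N (basisZ 1) = N.trace.re := by
  rw [qform_basisZ, qform_basisZ, trace_fin_two, Complex.add_re]

lemma qform_basisX_add (N : Matrix (Fin 2) (Fin 2) ℂ) :
    qform N (basisX 0) + qform N (basisX 1) = N.trace.re := by
  rw [qform_basisX_zero, qform_basisX_one, trace_fin_two]
  simp only [Complex.add_re, Complex.sub_re]
  ring

lemma contrast_basisZ (N : Matrix (Fin 2) (Fin 2) ℂ) :
    contrast N basisZ = (N 0 0).re - (N 1 1).re := by
  rw [contrast, qform_basisZ, qform_basisZ]

lemma contrast_basisX (N : Matrix (Fin 2) (Fin 2) ℂ) :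
    contrast N basisX = (N 0 1).re + (N 1 0).re := by
  rw [contrast, qform_basisX_zero, qform_basisX_one]
  simp only [Complex.add_re, Complex.sub_re]
  ring

lemma contrast_one_basisZ : contrast 1 basisZ = 0 := by
  simp [contrast_basisZ]

lemma contrast_one_basisX : contrast 1 basisX = 0 := by
  simp [contrast_basisX]

/-- The `(x, z)`-part of the Bloch vector of a positive semidefinite `N` is bounded by `Tr N`;
this is `det N ≥ 0`. -/
lemma Matrix.PosSemidef.contrast_basisZ_sq_add_contrast_basisX_sq_le
    {N : Matrix (Fin 2) (Fin 2) ℂ} (hN : N.PosSemidef) :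
    contrast N basisZ ^ 2 + contrast N basisX ^ 2 ≤ N.trace.re ^ 2 := by
  have h10 : N 1 0 = star (N 0 1) := (hN.1.apply 1 0).symm
  have h00 : (N 0 0).im = 0 := Complex.conj_eq_iff_im.1 (hN.1.apply 0 0)
  have h11 : (N 1 1).im = 0 := Complex.conj_eq_iff_im.1 (hN.1.apply 1 1)
  have hdet : 0 ≤ N.det.re := (Complex.nonneg_iff.1 hN.det_nonneg).1
  rw [det_fin_two, h10] at hdet
  simp only [Complex.sub_re, Complex.mul_re, h00, h11, Complex.star_def, Complex.conj_re,
    Complex.conj_im] at hdet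
  rw [contrast_basisZ, contrast_basisX, trace_fin_two, Complex.add_re, h10, Complex.star_def,
    Complex.conj_re]
  nlinarith [sq_nonneg (N 0 1).im]

lemma trace_re_one_sub (N : Matrix (Fin 2) (Fin 2) ℂ) : (1 - N).trace.re = 2 - N.trace.re := by
  simp [trace_sub]

lemma contrast_basisZ_sq_add_contrast_basisX_sq_le_min_sq {M : Matrix (Fin 2) (Fin 2) ℂ}
    (hM : M.PosSemidef) (hM' : (1 - M).PosSemidef) :
    contrast M basisZ ^ 2 + contrast M basisX ^ 2 ≤ min M.trace.re (2 - M.trace.re) ^ 2 := by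
  have h := hM'.contrast_basisZ_sq_add_contrast_basisX_sq_le
  rw [contrast_sub, contrast_sub, contrast_one_basisZ, contrast_one_basisX, trace_re_one_sub,
    zero_sub, zero_sub, neg_sq, neg_sq] at h
  rcases min_choice M.trace.re (2 - M.trace.re) with hmin | hmin <;> rw [hmin]
  exacts [hM.contrast_basisZ_sq_add_contrast_basisX_sq_le, h]

lemma gFun_noise_pair_mem_Icc {M : Matrix (Fin 2) (Fin 2) ℂ} (hM : M.PosSemidef)
    (hM' : (1 - M).PosSemidef) {v : Fin 2 → Fin 2 → ℂ}
    (hv : ∀ N, qform N (v 0) + qform N (v 1) = N.trace.re) (hv₁ : contrast 1 v = 0)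
    (hc : contrast M v ^ 2 ≤ min M.trace.re (2 - M.trace.re) ^ 2) :
    gFun (noise ![M, 1 - M] v) ∈
      Set.Icc 0 (|contrast M v| / min M.trace.re (2 - M.trace.re)) := by
  set m := min M.trace.re (2 - M.trace.re)
  have hm : 0 ≤ m := le_min (Complex.nonneg_iff.1 hM.trace_nonneg).1
    (trace_re_one_sub M ▸ (Complex.nonneg_iff.1 hM'.trace_nonneg).1)
  have hcm : |contrast M v| ≤ m := abs_le_of_sq_le_sq hc hm
  -- at `m = 0` the junk value `|contrast M v| / 0 = 0` is harmless, as `contrast M v = 0`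
  have hcm' : |contrast M v| ≤ |contrast M v| / m * m :=
    (div_mul_cancel_of_imp fun h => le_antisymm (h ▸ hcm) (abs_nonneg _)).ge
  have hs : |contrast M v| / m ∈ Set.Icc 0 1 := ⟨by positivity, div_le_one_of_le₀ hcm hm⟩
  have hP : IsPOVM ![M, 1 - M] := ⟨Fin.forall_fin_two.2 ⟨hM, hM'⟩, by simp [Fin.sum_univ_two]⟩
  refine hP.gFun_noise_mem_Icc (fun _ => hv _) hs (Fin.forall_fin_two.2 ⟨?_, ?_⟩)
  · exact hcm'.trans (mul_le_mul_of_nonneg_left (min_le_left _ _) hs.1)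
  · change |contrast (1 - M) v| ≤ _ * (1 - M).trace.re
    rw [contrast_sub, hv₁, zero_sub, abs_neg, trace_re_one_sub]
    exact hcm'.trans (mul_le_mul_of_nonneg_left (min_le_right _ _) hs.1)

/-- For a dichotomic POVM `{M, I−M}` on `ℂ²`,
`g(N({M,I−M},σ_z))² + g(N({M,I−M},σ_x))² ≤ 1`. -/
theorem stmt_10 (M : Matrix (Fin 2) (Fin 2) ℂ) (hM : M.PosSemidef)
    (hM' : (1 - M).PosSemidef) :
    gFun (noise ![M, 1 - M] basisZ) ^ 2 + gFun (noise ![M, 1 - M] basisX) ^ 2 ≤ 1 := by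
  set m := min M.trace.re (2 - M.trace.re)
  have hbound := contrast_basisZ_sq_add_contrast_basisX_sq_le_min_sq hM hM'
  obtain ⟨hZ₀, hZ⟩ := gFun_noise_pair_mem_Icc hM hM' qform_basisZ_add contrast_one_basisZ
    (by nlinarith [sq_nonneg (contrast M basisX)])
  obtain ⟨hX₀, hX⟩ := gFun_noise_pair_mem_Icc hM hM' qform_basisX_add contrast_one_basisX
    (by nlinarith [sq_nonneg (contrast M basisZ)])
  calc _ ≤ (|contrast M basisZ| / m) ^ 2 + (|contrast M basisX| / m) ^ 2 := by gcongr
    _ = (contrast M basisZ ^ 2 + contrast M basisX ^ 2) / m ^ 2 := by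
      rw [div_pow, div_pow, sq_abs, sq_abs, add_div]
    _ ≤ 1 := div_le_one_of_le₀ hbound (sq_nonneg m)
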